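/- Let ψ = (a, c, d, b) ∈ ℂ⁴ be a unit vector representing the pure 2-qubit state a|00⟩ + c|01⟩ + d|10⟩ + b|11⟩, let ψ̃ = (σy⊗σy) ψ*, and let ρ_A be the 2×2 reduced density matrix with entries (ρ_A)₁₁ = |a|²+|c|², (ρ_A)₁₂ = a d̄ + c b̄, (ρ_A)₂₁ = d ā + b c̄, (ρ_A)₂₂ = |d|²+|b|². Then the purity satisfies tr(ρ_A²) = 1 − (1/2)|⟨ψ̃, ψ⟩|². -/

import Mathlib

open Matrix Kronecker Complex ComplexOrder

/-! Write ψ as its coefficient matrix `M = !![a, c; d, b]`. Then `ρ_A = M Mᴴ` and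
`⟨ψ̃, ψ⟩ = -2 det M`. Every `2 × 2` matrix satisfies `tr (ρ²) = (tr ρ)² - 2 det ρ`
(Cayley–Hamilton); here `tr ρ_A = ‖ψ‖² = 1` and `det ρ_A = |det M|²`, so
`tr (ρ_A²) = 1 - 2 |det M|² = 1 - |⟨ψ̃, ψ⟩|² / 2`. -/

/-- The Pauli matrix `σy`. -/
noncomputable def pauliY : Matrix (Fin 2) (Fin 2) ℂ := !![0, -Complex.I; Complex.I, 0]

/-- The spin-flip matrix `σy ⊗ σy` (Kronecker product). -/
noncomputable def sigYY : Matrix (Fin 2 × Fin 2) (Fin 2 × Fin 2) ℂ := pauliY ⊗ₖ pauliY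

/-- The spin-flipped matrix `ρ̃ = (σy⊗σy) ρ* (σy⊗σy)`, with `ρ*` the entrywise
complex conjugate of `ρ`. -/
noncomputable def spinFlip (ρ : Matrix (Fin 2 × Fin 2) (Fin 2 × Fin 2) ℂ) :
    Matrix (Fin 2 × Fin 2) (Fin 2 × Fin 2) ℂ :=
  sigYY * ρ.map (starRingEnd ℂ) * sigYY

/-- The harmony `H(ρ) = max{0, 2 tr[(ρρ̃)²] − (tr(ρρ̃))² − 8 det ρ}` (for a density
matrix `ρ` all the quantities involved are real, so we take real parts). -/
noncomputable def harmony (ρ : Matrix (Fin 2 × Fin 2) (Fin 2 × Fin 2) ℂ) : ℝ :=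
  max 0 (2 * ((ρ * spinFlip ρ * (ρ * spinFlip ρ)).trace).re
    - ((ρ * spinFlip ρ).trace.re) ^ 2 - 8 * ρ.det.re)

theorem Matrix.trace_mul_self_fin_two {R : Type*} [CommRing R] (A : Matrix (Fin 2) (Fin 2) R) :
    (A * A).trace = A.trace ^ 2 - 2 * A.det := by
  rw [trace_fin_two, trace_fin_two, det_fin_two, mul_apply, mul_apply]
  simp only [Fin.sum_univ_two]
  ring

theorem Matrix.det_mul_conjTranspose_self {n : Type*} [Fintype n] [DecidableEq n]
    (M : Matrix n n ℂ) : (M * Mᴴ).det = (Complex.normSq M.det : ℂ) := by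
  rw [det_mul, det_conjTranspose, ← Complex.mul_conj]
  rfl

theorem Matrix.trace_sq_mul_conjTranspose_self_fin_two (M : Matrix (Fin 2) (Fin 2) ℂ) :
    (M * Mᴴ * (M * Mᴴ)).trace = (M * Mᴴ).trace ^ 2 - 2 * (Complex.normSq M.det : ℂ) := by
  rw [trace_mul_self_fin_two, det_mul_conjTranspose_self]

theorem mul_conjTranspose_self_fin_two_of (a b c d : ℂ) :
    !![a, c; d, b] * (!![a, c; d, b])ᴴ
      = !![((‖a‖ ^ 2 + ‖c‖ ^ 2 : ℝ) : ℂ), a * star d + c * star b;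
          d * star a + b * star c, ((‖d‖ ^ 2 + ‖b‖ ^ 2 : ℝ) : ℂ)] := by
  ext i j
  fin_cases i <;> fin_cases j <;> simp [mul_apply, Complex.mul_conj']

theorem sum_star_sigYY_mulVec_star_mul_eq_neg_two_mul_det (ψ : Fin 2 × Fin 2 → ℂ) :
    ∑ p, star ((sigYY *ᵥ star ψ) p) * ψ p = -2 * (Matrix.of fun i j => ψ (i, j)).det := by
  simp only [mulVec, dotProduct, sigYY, pauliY, kroneckerMap_apply, of_apply, cons_val',
    cons_val_fin_one, Pi.star_apply, RCLike.star_def, Fintype.sum_prod_type, Fin.sum_univ_two,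
    cons_val_zero, cons_val_one, star_add, star_mul', map_zero, mul_zero, zero_mul, map_neg,
    conj_conj, conj_I, neg_neg, zero_add, mul_neg, neg_mul, add_zero, I_mul_I, one_mul, neg_zero,
    det_fin_two]
  ring

/-- For the pure 2-qubit state `ψ = a|00⟩ + c|01⟩ + d|10⟩ + b|11⟩`
(a unit vector), with `ψ̃ = (σy⊗σy) ψ*` and reduced density matrix `ρ_A`, the
purity satisfies `tr(ρ_A²) = 1 − (1/2)|⟨ψ̃, ψ⟩|²`. -/
theorem purity_of_reduced_state (a b c d : ℂ)
    (hunit : Complex.normSq a + Complex.normSq b + Complex.normSq c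
      + Complex.normSq d = 1)
    (ψ : Fin 2 × Fin 2 → ℂ) (hψ : ψ = fun p => !![a, c; d, b] p.1 p.2)
    (ψt : Fin 2 × Fin 2 → ℂ) (hψt : ψt = sigYY.mulVec (star ψ))
    (ip : ℂ) (hip : ip = ∑ p, star (ψt p) * ψ p)
    (ρA : Matrix (Fin 2) (Fin 2) ℂ)
    (hρA : ρA = !![((‖a‖ ^ 2 + ‖c‖ ^ 2 : ℝ) : ℂ),
                    a * star d + c * star b;
                    d * star a + b * star c,
                    ((‖d‖ ^ 2 + ‖b‖ ^ 2 : ℝ) : ℂ)]) :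
    (ρA * ρA).trace = ((1 - (1 / 2) * (‖ip‖ : ℝ) ^ 2 : ℝ) : ℂ) := by
  set M := !![a, c; d, b]
  have hip_det : ip = -2 * M.det := by
    rw [hip, hψt, hψ, sum_star_sigYY_mulVec_star_mul_eq_neg_two_mul_det]
    rfl
  have htrace : (M * Mᴴ).trace = 1 := by
    rw [mul_conjTranspose_self_fin_two_of, trace_fin_two_of]
    simp only [Complex.sq_norm]
    exact_mod_cast (by linarith : normSq a + normSq c + (normSq d + normSq b) = 1)
  rw [hρA, ← mul_conjTranspose_self_fin_two_of, trace_sq_mul_conjTranspose_self_fin_two, htrace,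
    hip_det, Complex.sq_norm, normSq_mul, normSq_neg, normSq_ofNat]
  push_cast
  ring
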